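/- arXiv:1509.07158 — 3 statements merged into one kernel-verified Lean document; each statement's English description precedes it below -/
import Mathlib

section
/- For any c > 0, ∫_{−∞}^0 e^{−x²/(2c²)}/(1 + x²) dx = (π/2) e^{1/(2c²)} · 2(1 − Φ(√2 · (1/(√2 c)))) = (π/2) e^{1/(2c²)} · erfc(1/(√2 c)). -/
open MeasureTheory Real Set

set_option maxHeartbeats 1000000

/-- The standard Gaussian cumulative distribution function. -/
noncomputable def stdGaussianCDF (u : ℝ) : ℝ :=
  ∫ t in Set.Iic u, (Real.sqrt (2 * Real.pi))⁻¹ * Real.exp (-t ^ 2 / 2)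

/-- The complementary error function, `erfc t = 2 (1 - Φ(√2 t))`. -/
noncomputable def erfc (t : ℝ) : ℝ := 2 * (1 - stdGaussianCDF (Real.sqrt 2 * t))

lemma aux_exp_int {b : ℝ} (hb : 0 < b) :
    ∫ s in Ioi (0:ℝ), Real.exp (-b * s) = b⁻¹ := by
  have h := integral_comp_mul_left_Ioi (fun s => Real.exp (-s)) 0 hb
  simp only [mul_zero, integral_exp_neg_Ioi, neg_zero, Real.exp_zero, smul_eq_mul, mul_one] at h
  rw [← h]
  simp [neg_mul]

lemma aux_half_gaussian {b : ℝ} (hb : 0 < b) :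
    ∫ x in Iic (0:ℝ), Real.exp (-(b * x ^ 2)) = Real.sqrt (π / b) / 2 := by
  have h := integral_comp_neg_Iic (0:ℝ) (fun x => Real.exp (-(b * x ^ 2)))
  simp only [neg_sq, neg_zero] at h
  rw [h]
  simpa [neg_mul] using integral_gaussian_Ioi b

lemma aux_fubini {a : ℝ} (ha : 0 < a) :
    ∫ x in Iic (0:ℝ), Real.exp (-(a * x ^ 2)) * (1 + x ^ 2)⁻¹
      = ∫ s in Ioi (0:ℝ), Real.exp (-s) * (Real.sqrt (π / (a + s)) / 2) := by
  set f : ℝ → ℝ → ℝ := fun x s => Real.exp (-s) * Real.exp (-((a + s) * x ^ 2)) with hf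
  have hfact : ∀ x s : ℝ, f x s = Real.exp (-(a * x ^ 2)) * Real.exp (-(1 + x ^ 2) * s) := by
    intro x s
    simp only [hf, ← Real.exp_add]
    ring_nf
  have key : ∀ x : ℝ, (∫ s in Ioi (0:ℝ), f x s) = Real.exp (-(a * x ^ 2)) * (1 + x ^ 2)⁻¹ := by
    intro x
    have h1 : (fun s => f x s) = fun s => Real.exp (-(a * x ^ 2)) * Real.exp (-(1 + x ^ 2) * s) :=
      funext fun s => hfact x s
    rw [h1, MeasureTheory.integral_const_mul, aux_exp_int (by positivity)]
  have hmeas : AEStronglyMeasurable (Function.uncurry f)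
      ((volume.restrict (Iic (0:ℝ))).prod (volume.restrict (Ioi (0:ℝ)))) := by
    apply Continuous.aestronglyMeasurable
    unfold Function.uncurry
    fun_prop
  have hint : Integrable (Function.uncurry f)
      ((volume.restrict (Iic (0:ℝ))).prod (volume.restrict (Ioi (0:ℝ)))) := by
    rw [integrable_prod_iff hmeas]
    constructor
    · filter_upwards with x
      have h1 : (fun s => Function.uncurry f (x, s))
          = fun s => Real.exp (-(a * x ^ 2)) * Real.exp (-(1 + x ^ 2) * s) :=
        funext fun s => hfact x s
      rw [h1]
      exact ((exp_neg_integrableOn_Ioi 0 (by positivity : (0:ℝ) < 1 + x ^ 2)).const_mul _)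
    · have h2 : (fun x => ∫ s in Ioi (0:ℝ), ‖Function.uncurry f (x, s)‖)
          = fun x => Real.exp (-(a * x ^ 2)) * (1 + x ^ 2)⁻¹ := by
        funext x
        rw [show (fun s => ‖Function.uncurry f (x, s)‖) = fun s => f x s from
          funext fun s => by
            simp only [Function.uncurry, Real.norm_eq_abs]
            exact abs_of_nonneg (by positivity)]
        exact key x
      rw [h2]
      apply Integrable.mono' ((integrable_exp_neg_mul_sq ha).restrict)
      · apply Continuous.aestronglyMeasurable
        have : Continuous fun x : ℝ => (1 + x ^ 2)⁻¹ :=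
          Continuous.inv₀ (by fun_prop) (fun x => by positivity)
        fun_prop
      · filter_upwards with x
        rw [Real.norm_eq_abs, abs_of_nonneg (by positivity)]
        have h3 : (1 + x ^ 2)⁻¹ ≤ 1 := by
          rw [inv_le_one_iff₀]; right; nlinarith
        calc Real.exp (-(a * x ^ 2)) * (1 + x ^ 2)⁻¹
            ≤ Real.exp (-(a * x ^ 2)) * 1 := by
              apply mul_le_mul_of_nonneg_left h3 (Real.exp_nonneg _)
        _ = Real.exp (-a * x ^ 2) := by rw [mul_one, neg_mul]
  have hswap := MeasureTheory.integral_integral_swap hint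
  calc (∫ x in Iic (0:ℝ), Real.exp (-(a * x ^ 2)) * (1 + x ^ 2)⁻¹)
      = ∫ x in Iic (0:ℝ), ∫ s in Ioi (0:ℝ), f x s := by
        apply setIntegral_congr_fun measurableSet_Iic
        intro x _
        exact (key x).symm
    _ = ∫ s in Ioi (0:ℝ), ∫ x in Iic (0:ℝ), f x s := hswap
    _ = ∫ s in Ioi (0:ℝ), Real.exp (-s) * (Real.sqrt (π / (a + s)) / 2) := by
        apply setIntegral_congr_fun measurableSet_Ioi
        intro s hs
        have hs' : (0:ℝ) < s := hs
        have h4 : (fun x => f x s) = fun x => Real.exp (-s) * Real.exp (-((a + s) * x ^ 2)) := rfl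
        simp only [h4]
        rw [MeasureTheory.integral_const_mul, aux_half_gaussian (by positivity)]

lemma aux_subst {a : ℝ} (ha : 0 < a) :
    ∫ s in Ioi (0:ℝ), Real.exp (-s) * (Real.sqrt (a + s))⁻¹
      = 2 * Real.exp a * ∫ u in Ioi (Real.sqrt a), Real.exp (-u ^ 2) := by
  have hsa : (0:ℝ) ≤ Real.sqrt a := Real.sqrt_nonneg a
  have himg : (fun u : ℝ => u ^ 2 - a) '' Ioi (Real.sqrt a) = Ioi 0 := by
    ext y
    constructor
    · rintro ⟨u, hu, rfl⟩
      have hu' : Real.sqrt a < u := hu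
      have : a < u ^ 2 := by
        calc a = Real.sqrt a ^ 2 := (Real.sq_sqrt ha.le).symm
        _ < u ^ 2 := by
            apply pow_lt_pow_left₀ hu' hsa
            norm_num
      simpa using sub_pos.mpr this
    · intro hy
      refine ⟨Real.sqrt (y + a), ?_, ?_⟩
      · have : a < y + a := by linarith [mem_Ioi.mp hy]
        exact Real.sqrt_lt_sqrt ha.le this
      · have : (0:ℝ) ≤ y + a := by linarith [mem_Ioi.mp hy]
        simp [Real.sq_sqrt this]
  have hderiv : ∀ u ∈ Ioi (Real.sqrt a),
      HasDerivWithinAt (fun u : ℝ => u ^ 2 - a) (2 * u) (Ioi (Real.sqrt a)) u := by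
    intro u hu
    have : HasDerivAt (fun u : ℝ => u ^ 2 - a) (2 * u) u := by
      simpa using ((hasDerivAt_pow 2 u).sub_const a)
    exact this.hasDerivWithinAt
  have hinj : InjOn (fun u : ℝ => u ^ 2 - a) (Ioi (Real.sqrt a)) := by
    intro x hx y hy hxy
    have hx0 : 0 ≤ x := le_trans hsa (le_of_lt hx)
    have hy0 : 0 ≤ y := le_trans hsa (le_of_lt hy)
    have : x ^ 2 = y ^ 2 := by simpa [sub_left_inj] using hxy
    nlinarith
  have hsub := integral_image_eq_integral_abs_deriv_smul measurableSet_Ioi hderiv hinj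
    (fun s => Real.exp (-s) * (Real.sqrt (a + s))⁻¹)
  rw [himg] at hsub
  rw [hsub]
  rw [← MeasureTheory.integral_const_mul]
  apply setIntegral_congr_fun measurableSet_Ioi
  intro u hu
  have hu' : Real.sqrt a < u := hu
  have hu0 : 0 < u := lt_of_le_of_lt hsa hu'
  have h1 : a + (u ^ 2 - a) = u ^ 2 := by ring
  have h2 : Real.sqrt (u ^ 2) = u := by
    rw [Real.sqrt_sq hu0.le]
  have h3 : Real.exp (-(u ^ 2 - a)) = Real.exp a * Real.exp (-u ^ 2) := by
    rw [← Real.exp_add]; ring_nf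
  simp only [smul_eq_mul, h1, h2, h3, abs_of_pos (by linarith : (0:ℝ) < 2 * u)]
  field_simp



lemma aux_total : (∫ t : ℝ, (Real.sqrt (2 * π))⁻¹ * Real.exp (-t ^ 2 / 2)) = 1 := by
  rw [MeasureTheory.integral_const_mul]
  have h : (fun t : ℝ => Real.exp (-t ^ 2 / 2)) = fun t : ℝ => Real.exp (-(1/2 : ℝ) * t ^ 2) := by
    ext t; ring_nf
  rw [h, integral_gaussian]
  rw [show π / (1/2 : ℝ) = 2 * π by ring]
  rw [inv_mul_cancel₀ (ne_of_gt (Real.sqrt_pos.mpr (by positivity)))]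

lemma aux_integrable_density : Integrable (fun t : ℝ => (Real.sqrt (2 * π))⁻¹ * Real.exp (-t ^ 2 / 2)) := by
  have h : (fun t : ℝ => (Real.sqrt (2 * π))⁻¹ * Real.exp (-t ^ 2 / 2))
      = fun t : ℝ => (Real.sqrt (2 * π))⁻¹ * Real.exp (-(1/2 : ℝ) * t ^ 2) := by
    ext t; ring_nf
  rw [h]
  exact (integrable_exp_neg_mul_sq (by norm_num)).const_mul _

lemma aux_tail (w : ℝ) : 1 - stdGaussianCDF w
    = (Real.sqrt (2 * π))⁻¹ * ∫ t in Ioi w, Real.exp (-t ^ 2 / 2) := by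
  have hsplit := intervalIntegral.integral_Iic_add_Ioi (b := w) aux_integrable_density.integrableOn
    aux_integrable_density.integrableOn
  rw [aux_total] at hsplit
  rw [stdGaussianCDF]
  rw [← MeasureTheory.integral_const_mul]
  linarith


theorem stmt_8 (c : ℝ) (hc : 0 < c) :
    (∫ x in Set.Iic (0 : ℝ), Real.exp (-x ^ 2 / (2 * c ^ 2)) / (1 + x ^ 2))
      = (Real.pi / 2) * Real.exp (1 / (2 * c ^ 2)) * erfc (1 / (Real.sqrt 2 * c)) := by
  set a : ℝ := (2 * c ^ 2)⁻¹ with ha_def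
  have ha : 0 < a := by positivity
  have h2 : Real.sqrt 2 * Real.sqrt 2 = 2 := Real.mul_self_sqrt (by norm_num)
  have hs2 : (0:ℝ) < Real.sqrt 2 := Real.sqrt_pos.mpr (by norm_num)
  have hsπ : (0:ℝ) < Real.sqrt π := Real.sqrt_pos.mpr Real.pi_pos
  have hπ : Real.sqrt π * Real.sqrt π = π := Real.mul_self_sqrt Real.pi_pos.le
  have hsa' : Real.sqrt a = (Real.sqrt 2 * c)⁻¹ := by
    rw [ha_def, Real.sqrt_inv, Real.sqrt_mul (by norm_num), Real.sqrt_sq hc.le]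
  have hkey : Real.sqrt 2 * Real.sqrt a = 1 / c := by
    rw [hsa', mul_inv, ← mul_assoc, mul_inv_cancel₀ (ne_of_gt hs2), one_mul, one_div]
  set I : ℝ := ∫ u in Ioi (Real.sqrt a), Real.exp (-u ^ 2) with hI_def
  -- LHS computation
  have hLHS : (∫ x in Set.Iic (0 : ℝ), Real.exp (-x ^ 2 / (2 * c ^ 2)) / (1 + x ^ 2))
      = Real.sqrt π * Real.exp a * I := by
    calc (∫ x in Set.Iic (0 : ℝ), Real.exp (-x ^ 2 / (2 * c ^ 2)) / (1 + x ^ 2))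
        = ∫ x in Iic (0:ℝ), Real.exp (-(a * x ^ 2)) * (1 + x ^ 2)⁻¹ := by
          apply setIntegral_congr_fun measurableSet_Iic
          intro x _
          dsimp only
          rw [div_eq_mul_inv]
          congr 2
          rw [ha_def]; ring
      _ = ∫ s in Ioi (0:ℝ), Real.exp (-s) * (Real.sqrt (π / (a + s)) / 2) := aux_fubini ha
      _ = Real.sqrt π / 2 * ∫ s in Ioi (0:ℝ), Real.exp (-s) * (Real.sqrt (a + s))⁻¹ := by
          rw [← MeasureTheory.integral_const_mul]
          apply setIntegral_congr_fun measurableSet_Ioi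
          intro s hs
          have hs' : (0:ℝ) < s := hs
          dsimp only
          rw [Real.sqrt_div Real.pi_pos.le]
          ring
      _ = Real.sqrt π / 2 * (2 * Real.exp a * I) := by rw [aux_subst ha]
      _ = Real.sqrt π * Real.exp a * I := by ring
  rw [hLHS]
  -- RHS computation
  have harg : Real.sqrt 2 * (1 / (Real.sqrt 2 * c)) = 1 / c := by
    rw [mul_one_div, mul_comm (Real.sqrt 2) c, div_mul_eq_div_div, div_right_comm,
      div_self (ne_of_gt hs2)]
  have hItail : (∫ t in Ioi ((1:ℝ) / c), Real.exp (-t ^ 2 / 2)) = Real.sqrt 2 * I := by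
    have hcomp := integral_comp_mul_left_Ioi (fun t => Real.exp (-t ^ 2 / 2))
      (Real.sqrt a) hs2
    rw [hkey] at hcomp
    have heq : (fun u : ℝ => Real.exp (-(Real.sqrt 2 * u) ^ 2 / 2))
        = fun u : ℝ => Real.exp (-u ^ 2) := by
      funext u
      congr 1
      rw [mul_pow]
      rw [show Real.sqrt 2 ^ 2 = 2 by rw [sq]; exact h2]
      ring
    rw [heq] at hcomp
    rw [← hI_def] at hcomp
    rw [smul_eq_mul] at hcomp
    rw [hcomp] at *
    field_simp
  rw [erfc, harg, aux_tail, hItail]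
  rw [show Real.exp (1 / (2 * c ^ 2)) = Real.exp a by rw [ha_def, one_div]]
  rw [show Real.sqrt (2 * π) = Real.sqrt 2 * Real.sqrt π from
    Real.sqrt_mul (by norm_num) π]
  have hne2 : Real.sqrt 2 ≠ 0 := ne_of_gt hs2
  have hneπ : Real.sqrt π ≠ 0 := ne_of_gt hsπ
  field_simp
  linear_combination I * hπ
end

section
/- Let L_n: ℝ^d → ℝ be convex and differentiable, let P be a seminorm on ℝ^d, let θ* ∈ ℝ^d, and suppose subspaces M ⊆ M̄ ⊆ ℝ^d satisfy the decomposability property P(θ + γ) = P(θ) + P(γ) for all θ ∈ M and γ ∈ M̄^⊥. Then for any Δ ∈ ℝ^d, P(θ* + Δ) − P(θ*) ≥ P(Δ_{M̄^⊥}) − P(Δ_{M̄}) − 2P(θ*_{M^⊥}), where Δ_N denotes the orthogonal projection of Δ onto subspace N. -/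
/-!
Split `θ* = a + b` along `M ⊕ Mᗮ` and `Δ = c + e` along `M̄ ⊕ M̄ᗮ`. Decomposability gives
`P (a + e) = P a + P e`, and `a + e` differs from `θ* + Δ` by `b + c`, so the triangle inequality
yields `P a + P e ≤ P (θ* + Δ) + P b + P c`; combined with `P θ* ≤ P a + P b` this is the claim.
-/

theorem map_add_sub_map_ge_of_map_add_eq {F E : Type*} [AddCommGroup E] [FunLike F E ℝ]
    [AddGroupSeminormClass F E ℝ] (p : F) {a b c e : E} (hae : p (a + e) = p a + p e) :
    p (a + b + (c + e)) - p (a + b) ≥ p e - p c - 2 * p b := by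
  have h_sub : p (a + e) ≤ p (a + b + (c + e)) + p b + p c :=
    calc p (a + e) = p (a + b + (c + e) - (b + c)) := by congr 1; abel
      _ ≤ p (a + b + (c + e)) + p (b + c) := map_sub_le_add p _ _
      _ ≤ p (a + b + (c + e)) + p b + p c := by linarith [map_add_le_add p b c]
  have h_θ : p (a + b) ≤ p a + p b := map_add_le_add p a b
  linarith

theorem stmt_12_general (d : ℕ)
    (P : Seminorm ℝ (EuclideanSpace ℝ (Fin d)))
    (M Mbar : Submodule ℝ (EuclideanSpace ℝ (Fin d)))
    (hdecomp : ∀ θ ∈ M, ∀ γ ∈ Mbarᗮ, P (θ + γ) = P θ + P γ)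
    (θstar Δ : EuclideanSpace ℝ (Fin d)) :
    P (θstar + Δ) - P θstar
      ≥ P (↑(Mbarᗮ.orthogonalProjectionOnto Δ)) - P (↑(Mbar.orthogonalProjectionOnto Δ))
        - 2 * P (↑(Mᗮ.orthogonalProjectionOnto θstar)) := by
  have hθ : (M.orthogonalProjectionOnto θstar : EuclideanSpace ℝ (Fin d))
      + Mᗮ.orthogonalProjectionOnto θstar = θstar :=
    M.starProjection_add_starProjection_orthogonal θstar
  have hΔ : (Mbar.orthogonalProjectionOnto Δ : EuclideanSpace ℝ (Fin d))
      + Mbarᗮ.orthogonalProjectionOnto Δ = Δ :=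
    Mbar.starProjection_add_starProjection_orthogonal Δ
  conv_lhs => rw [← hθ, ← hΔ]
  exact map_add_sub_map_ge_of_map_add_eq P
    (hdecomp _ (M.orthogonalProjectionOnto θstar).2 _ (Mbarᗮ.orthogonalProjectionOnto Δ).2)

theorem stmt_12 (d : ℕ) (L : EuclideanSpace ℝ (Fin d) → ℝ)
    (hLconv : ConvexOn ℝ Set.univ L) (hLdiff : Differentiable ℝ L)
    (P : Seminorm ℝ (EuclideanSpace ℝ (Fin d)))
    (M Mbar : Submodule ℝ (EuclideanSpace ℝ (Fin d))) (hMM : M ≤ Mbar)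
    (hdecomp : ∀ θ ∈ M, ∀ γ ∈ Mbarᗮ, P (θ + γ) = P θ + P γ)
    (θstar Δ : EuclideanSpace ℝ (Fin d)) :
    P (θstar + Δ) - P θstar
      ≥ P (↑(Mbarᗮ.orthogonalProjectionOnto Δ)) - P (↑(Mbar.orthogonalProjectionOnto Δ))
        - 2 * P (↑(Mᗮ.orthogonalProjectionOnto θstar)) :=
  stmt_12_general d P M Mbar hdecomp θstar Δ
end

section
/- Let σ₁ > 0, ρ ∈ (−1, 1), and define H(x; ρ) = ∫_{−∞}^x (√(2π) σ₁)^{−1} e^{−u²/(2σ₁²)} Φ(ρu/(σ₁√(1−ρ²))) du and, for a probability density f on ℝ, K(ρ) = 2∫_{−∞}^0 H(x; ρ) f(x) dx. Then (under suitable integrability allowing differentiation under the integral), K'(ρ) = −(1/(π√(1−ρ²))) ∫_{−∞}^0 f(x) exp(−x²/(2σ₁²(1−ρ²))) dx. -/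
open MeasureTheory

noncomputable def Hfun (σ₁ : ℝ) (x ρ : ℝ) : ℝ :=
  ∫ u in Set.Iic x,
    (Real.sqrt (2 * Real.pi) * σ₁)⁻¹ * Real.exp (-u ^ 2 / (2 * σ₁ ^ 2)) *
      stdGaussianCDF (ρ * u / (σ₁ * Real.sqrt (1 - ρ ^ 2)))

noncomputable def Kfun (σ₁ : ℝ) (f : ℝ → ℝ) (ρ : ℝ) : ℝ :=
  2 * ∫ x in Set.Iic (0 : ℝ), Hfun σ₁ x ρ * f x

/-!
Differentiate twice under the integral sign. By the chain rule the `ρ`-derivative of the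
integrand of `H` is the `N(0, σ²)` density times `φ(ρu/(σ√(1-ρ²))) · u / (σ(1-ρ²)^{3/2})`, and
the two Gaussian factors merge into a multiple of `u · exp(-u²/(2σ²(1-ρ²)))`, which has an
explicit primitive; hence `∂H/∂ρ = -exp(-x²/(2σ²(1-ρ²))) / (2π√(1-ρ²))`. On the neighbourhood
of `ρ` where `1 - r² > (1-ρ²)/2`, both derivatives are dominated by integrable functions of the
integration variable, which justifies the two exchanges of derivative and integral.
-/

open Real Set Filter Topology ProbabilityTheory

theorem hasDerivAt_integral_Iic {E : Type*} [NormedAddCommGroup E] [NormedSpace ℝ E]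
    [CompleteSpace E] {g : ℝ → E} (hg : Integrable g) (hc : Continuous g) (x : ℝ) :
    HasDerivAt (fun y => ∫ t in Iic y, g t) (g x) x := by
  have hsplit : (fun y => ∫ t in Iic y, g t) =
      fun y => (∫ t in Iic 0, g t) + ∫ t in (0 : ℝ)..y, g t := by
    ext y
    rw [← intervalIntegral.integral_Iic_sub_Iic hg.integrableOn hg.integrableOn]
    abel
  rw [hsplit]
  exact (hc.integral_hasStrictDerivAt 0 x).hasDerivAt.const_add _

theorem integrable_mul_exp_neg_sq_div {b : ℝ} (hb : 0 < b) :
    Integrable fun u : ℝ => u * exp (-u ^ 2 / (2 * b)) := by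
  have hform : ∀ u : ℝ, -u ^ 2 / (2 * b) = -(2 * b)⁻¹ * u ^ 2 := fun u => by ring
  simpa only [hform] using integrable_mul_exp_neg_mul_sq (inv_pos.2 (mul_pos two_pos hb))

theorem integral_Iic_mul_exp_neg_sq_div {b : ℝ} (hb : 0 < b) (x : ℝ) :
    ∫ u in Iic x, u * exp (-u ^ 2 / (2 * b)) = -b * exp (-x ^ 2 / (2 * b)) := by
  have hform : ∀ u : ℝ, -u ^ 2 / (2 * b) = -(2 * b)⁻¹ * u ^ 2 := fun u => by ring
  have hderiv (u : ℝ) :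
      HasDerivAt (fun u => -b * exp (-u ^ 2 / (2 * b))) (u * exp (-u ^ 2 / (2 * b))) u :=
    (((hasDerivAt_pow 2 u).neg.div_const (2 * b)).exp.const_mul (-b)).congr_deriv
      (by simp only [Pi.neg_apply]; field_simp; norm_num; ring)
  have hsq : Tendsto (fun u : ℝ => u ^ 2) atBot atTop := by
    simpa only [Function.comp_def, sq_abs] using
      (tendsto_pow_atTop two_ne_zero).comp (tendsto_abs_atBot_atTop (G := ℝ))
  have hlim : Tendsto (fun u : ℝ => -b * exp (-u ^ 2 / (2 * b))) atBot (𝓝 0) := by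
    simpa only [hform, mul_zero, Function.comp_def] using (tendsto_exp_atBot.comp
      (hsq.const_mul_atTop_of_neg (neg_lt_zero.2 (inv_pos.2 (mul_pos two_pos hb))))).const_mul (-b)
  rw [integral_Iic_of_hasDerivAt_of_tendsto' (fun u _ => hderiv u)
    (integrable_mul_exp_neg_sq_div hb).integrableOn hlim, sub_zero]

theorem gaussianPDFReal_zero_one :
    gaussianPDFReal 0 1 = fun t => (√(2 * π))⁻¹ * exp (-t ^ 2 / 2) := by
  ext t
  simp [gaussianPDFReal]

theorem stdGaussianCDF_eq_integral_gaussianPDFReal (u : ℝ) :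
    stdGaussianCDF u = ∫ t in Iic u, gaussianPDFReal 0 1 t := by
  rw [gaussianPDFReal_zero_one]
  rfl

theorem hasDerivAt_stdGaussianCDF (u : ℝ) :
    HasDerivAt stdGaussianCDF (gaussianPDFReal 0 1 u) u := by
  simp_rw [funext stdGaussianCDF_eq_integral_gaussianPDFReal]
  exact hasDerivAt_integral_Iic (integrable_gaussianPDFReal 0 1)
    (by rw [gaussianPDFReal_zero_one]; fun_prop) u

theorem continuous_stdGaussianCDF : Continuous stdGaussianCDF :=
  continuous_iff_continuousAt.2 fun u => (hasDerivAt_stdGaussianCDF u).continuousAt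

theorem stdGaussianCDF_nonneg (u : ℝ) : 0 ≤ stdGaussianCDF u := by
  rw [stdGaussianCDF_eq_integral_gaussianPDFReal]
  exact setIntegral_nonneg measurableSet_Iic fun t _ => gaussianPDFReal_nonneg 0 1 t

theorem stdGaussianCDF_le_one (u : ℝ) : stdGaussianCDF u ≤ 1 := by
  rw [stdGaussianCDF_eq_integral_gaussianPDFReal, ← integral_gaussianPDFReal_eq_one 0 one_ne_zero]
  exact setIntegral_le_integral (integrable_gaussianPDFReal 0 1)
    (ae_of_all _ (gaussianPDFReal_nonneg 0 1))

theorem hasDerivAt_mul_div_sqrt_one_sub_sq {σ ρ : ℝ} (hσ : σ ≠ 0) (hρ : ρ ^ 2 < 1) (u : ℝ) :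
    HasDerivAt (fun r => r * u / (σ * √(1 - r ^ 2)))
      (u / (σ * ((1 - ρ ^ 2) * √(1 - ρ ^ 2)))) ρ := by
  have h1 : 0 < 1 - ρ ^ 2 := by linarith
  have hs2 : √(1 - ρ ^ 2) ^ 2 = 1 - ρ ^ 2 := sq_sqrt h1.le
  refine (((hasDerivAt_id ρ).mul_const u).div
    ((((hasDerivAt_pow 2 ρ).const_sub 1).sqrt h1.ne').const_mul σ) (by positivity)).congr_deriv ?_
  norm_num
  field_simp
  linear_combination -u * ρ ^ 2 * hs2

theorem hasDerivAt_Hfun_integrand {σ ρ : ℝ} (hσ : σ ≠ 0) (hρ : ρ ^ 2 < 1) (u : ℝ) :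
    HasDerivAt (fun r => (√(2 * π) * σ)⁻¹ * exp (-u ^ 2 / (2 * σ ^ 2)) *
        stdGaussianCDF (r * u / (σ * √(1 - r ^ 2))))
      ((2 * π * σ ^ 2 * ((1 - ρ ^ 2) * √(1 - ρ ^ 2)))⁻¹ *
        (u * exp (-u ^ 2 / (2 * σ ^ 2 * (1 - ρ ^ 2))))) ρ := by
  have h1 : 0 < 1 - ρ ^ 2 := by linarith
  have hs2 : √(1 - ρ ^ 2) ^ 2 = 1 - ρ ^ 2 := sq_sqrt h1.le
  have h2π : √(2 * π) ^ 2 = 2 * π := sq_sqrt (by positivity)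
  have hexp : exp (-u ^ 2 / (2 * σ ^ 2)) * exp (-(ρ * u / (σ * √(1 - ρ ^ 2))) ^ 2 / 2) =
      exp (-u ^ 2 / (2 * σ ^ 2 * (1 - ρ ^ 2))) := by
    rw [← exp_add]
    congr 1
    field_simp
    linear_combination u ^ 2 * ρ ^ 2 * hs2
  refine (((hasDerivAt_stdGaussianCDF _).comp ρ
    (hasDerivAt_mul_div_sqrt_one_sub_sq hσ hρ u)).const_mul _).congr_deriv ?_
  rw [gaussianPDFReal_zero_one, ← hexp]
  field_simp
  rw [h2π]

theorem exp_neg_sq_div_le_exp_neg_sq_div {b c : ℝ} (hb : 0 < b) (hbc : b ≤ c) (u : ℝ) :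
    exp (-u ^ 2 / b) ≤ exp (-u ^ 2 / c) := by
  simp only [neg_div, exp_le_exp, neg_le_neg_iff]
  exact div_le_div_of_nonneg_left (sq_nonneg u) hb hbc

theorem setOf_half_lt_one_sub_sq_mem_nhds {ρ : ℝ} (hρ : ρ ^ 2 < 1) :
    {r : ℝ | (1 - ρ ^ 2) / 2 < 1 - r ^ 2} ∈ 𝓝 ρ :=
  (isOpen_lt continuous_const (by fun_prop)).mem_nhds
    (by show (1 - ρ ^ 2) / 2 < 1 - ρ ^ 2; linarith)

theorem continuous_Hfun_integrand (σ ρ : ℝ) :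
    Continuous fun u => (√(2 * π) * σ)⁻¹ * exp (-u ^ 2 / (2 * σ ^ 2)) *
      stdGaussianCDF (ρ * u / (σ * √(1 - ρ ^ 2))) := by
  have := continuous_stdGaussianCDF
  fun_prop

theorem integrable_Hfun_integrand {σ : ℝ} (hσ : σ ≠ 0) (ρ : ℝ) :
    Integrable fun u => (√(2 * π) * σ)⁻¹ * exp (-u ^ 2 / (2 * σ ^ 2)) *
      stdGaussianCDF (ρ * u / (σ * √(1 - ρ ^ 2))) := by
  have hgauss : Integrable fun u : ℝ => (√(2 * π) * σ)⁻¹ * exp (-u ^ 2 / (2 * σ ^ 2)) := by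
    have hform : ∀ u : ℝ, -u ^ 2 / (2 * σ ^ 2) = -(2 * σ ^ 2)⁻¹ * u ^ 2 := fun u => by ring
    simpa only [hform] using (integrable_exp_neg_mul_sq (by positivity)).const_mul _
  refine hgauss.mul_bdd (c := 1)
    (continuous_stdGaussianCDF.comp (by fun_prop)).aestronglyMeasurable (ae_of_all _ fun u => ?_)
  rw [Real.norm_of_nonneg (stdGaussianCDF_nonneg _)]
  exact stdGaussianCDF_le_one _

theorem continuous_Hfun_left {σ : ℝ} (hσ : σ ≠ 0) (ρ : ℝ) : Continuous fun x => Hfun σ x ρ :=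
  continuous_iff_continuousAt.2 fun x =>
    (hasDerivAt_integral_Iic (integrable_Hfun_integrand hσ ρ) (continuous_Hfun_integrand σ ρ)
      x).continuousAt

theorem norm_Hfun_le {σ : ℝ} (hσ : σ ≠ 0) (x ρ : ℝ) :
    ‖Hfun σ x ρ‖ ≤ ∫ u, ‖(√(2 * π) * σ)⁻¹ * exp (-u ^ 2 / (2 * σ ^ 2)) *
      stdGaussianCDF (ρ * u / (σ * √(1 - ρ ^ 2)))‖ :=
  (norm_integral_le_integral_norm _).trans
    (setIntegral_le_integral (integrable_Hfun_integrand hσ ρ).norm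
      (ae_of_all _ fun _ => norm_nonneg _))

theorem norm_Hfun_integrand_deriv_le {σ δ r : ℝ} (hσ : σ ≠ 0) (hδ : 0 < δ) (hr : δ < 1 - r ^ 2)
    (u : ℝ) :
    ‖(2 * π * σ ^ 2 * ((1 - r ^ 2) * √(1 - r ^ 2)))⁻¹ *
        (u * exp (-u ^ 2 / (2 * σ ^ 2 * (1 - r ^ 2))))‖ ≤
      (2 * π * σ ^ 2 * (δ * √δ))⁻¹ * ‖u * exp (-u ^ 2 / (2 * σ ^ 2))‖ := by
  have hr0 : 0 < 1 - r ^ 2 := hδ.trans hr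
  have hcoeff : (2 * π * σ ^ 2 * ((1 - r ^ 2) * √(1 - r ^ 2)))⁻¹ ≤
      (2 * π * σ ^ 2 * (δ * √δ))⁻¹ := by
    gcongr
  have hexp : exp (-u ^ 2 / (2 * σ ^ 2 * (1 - r ^ 2))) ≤ exp (-u ^ 2 / (2 * σ ^ 2)) :=
    exp_neg_sq_div_le_exp_neg_sq_div (by positivity) (by nlinarith) u
  rw [norm_mul, norm_mul, norm_mul, Real.norm_of_nonneg (by positivity),
    Real.norm_of_nonneg (exp_pos _).le, Real.norm_of_nonneg (exp_pos _).le]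
  gcongr

theorem hasDerivAt_Hfun {σ : ℝ} (hσ : σ ≠ 0) (x : ℝ) {ρ : ℝ} (hρ : ρ ^ 2 < 1) :
    HasDerivAt (Hfun σ x)
      (-(1 / (2 * π * √(1 - ρ ^ 2))) * exp (-x ^ 2 / (2 * σ ^ 2 * (1 - ρ ^ 2)))) ρ := by
  set δ := (1 - ρ ^ 2) / 2 with hδ_def
  have hδ : 0 < δ := by rw [hδ_def]; linarith
  obtain ⟨-, hderiv⟩ := hasDerivAt_integral_of_dominated_loc_of_deriv_le
    (μ := volume.restrict (Iic x))
    (F := fun r u => (√(2 * π) * σ)⁻¹ * exp (-u ^ 2 / (2 * σ ^ 2)) *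
      stdGaussianCDF (r * u / (σ * √(1 - r ^ 2))))
    (F' := fun r u => (2 * π * σ ^ 2 * ((1 - r ^ 2) * √(1 - r ^ 2)))⁻¹ *
      (u * exp (-u ^ 2 / (2 * σ ^ 2 * (1 - r ^ 2)))))
    (setOf_half_lt_one_sub_sq_mem_nhds hρ)
    (Eventually.of_forall fun r => (continuous_Hfun_integrand σ r).aestronglyMeasurable)
    (integrable_Hfun_integrand hσ ρ).integrableOn
    (Continuous.aestronglyMeasurable (by fun_prop))
    (ae_of_all _ fun u r hr => norm_Hfun_integrand_deriv_le hσ hδ hr u)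
    ((integrable_mul_exp_neg_sq_div (by positivity)).norm.const_mul _).integrableOn
    (ae_of_all _ fun u r (hr : δ < 1 - r ^ 2) => hasDerivAt_Hfun_integrand hσ (by linarith) u)
  refine hderiv.congr_deriv ?_
  have h1 : 0 < 1 - ρ ^ 2 := by linarith
  rw [integral_const_mul, show 2 * σ ^ 2 * (1 - ρ ^ 2) = 2 * (σ ^ 2 * (1 - ρ ^ 2)) by ring,
    integral_Iic_mul_exp_neg_sq_div (by positivity) x]
  field_simp

theorem norm_Hfun_deriv_mul_le {σ δ r : ℝ} (hδ : 0 < δ) (hr : δ < 1 - r ^ 2) (f : ℝ → ℝ)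
    (x : ℝ) :
    ‖-(1 / (2 * π * √(1 - r ^ 2))) * exp (-x ^ 2 / (2 * σ ^ 2 * (1 - r ^ 2))) * f x‖ ≤
      (2 * π * √δ)⁻¹ * ‖f x‖ := by
  have hr0 : 0 < 1 - r ^ 2 := hδ.trans hr
  have hexp : exp (-x ^ 2 / (2 * σ ^ 2 * (1 - r ^ 2))) ≤ 1 :=
    exp_le_one_iff.2 (div_nonpos_of_nonpos_of_nonneg (by nlinarith) (by positivity))
  rw [norm_mul, norm_mul, norm_neg, Real.norm_of_nonneg (by positivity),
    Real.norm_of_nonneg (exp_pos _).le, one_div]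
  calc (2 * π * √(1 - r ^ 2))⁻¹ * exp (-x ^ 2 / (2 * σ ^ 2 * (1 - r ^ 2))) * ‖f x‖
      ≤ (2 * π * √δ)⁻¹ * 1 * ‖f x‖ := by gcongr
    _ = (2 * π * √δ)⁻¹ * ‖f x‖ := by rw [mul_one]

theorem hasDerivAt_Kfun {σ : ℝ} (hσ : σ ≠ 0) {f : ℝ → ℝ} (hf : Integrable f) {ρ : ℝ}
    (hρ : ρ ^ 2 < 1) :
    HasDerivAt (Kfun σ f) (-(1 / (π * √(1 - ρ ^ 2))) *
      ∫ x in Iic 0, f x * exp (-x ^ 2 / (2 * σ ^ 2 * (1 - ρ ^ 2)))) ρ := by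
  set δ := (1 - ρ ^ 2) / 2 with hδ_def
  have hδ : 0 < δ := by rw [hδ_def]; linarith
  obtain ⟨-, hderiv⟩ := hasDerivAt_integral_of_dominated_loc_of_deriv_le
    (μ := volume.restrict (Iic 0))
    (F := fun r x => Hfun σ x r * f x)
    (F' := fun r x => -(1 / (2 * π * √(1 - r ^ 2))) * exp (-x ^ 2 / (2 * σ ^ 2 * (1 - r ^ 2))) *
      f x)
    (setOf_half_lt_one_sub_sq_mem_nhds hρ)
    (Eventually.of_forall fun r =>
      (continuous_Hfun_left hσ r).aestronglyMeasurable.mul hf.aestronglyMeasurable.restrict)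
    (hf.restrict.bdd_mul (continuous_Hfun_left hσ ρ).aestronglyMeasurable
      (ae_of_all _ (norm_Hfun_le hσ · ρ)))
    ((Continuous.aestronglyMeasurable (by fun_prop)).mul hf.aestronglyMeasurable.restrict)
    (ae_of_all _ fun x r hr => norm_Hfun_deriv_mul_le hδ hr f x)
    (hf.norm.const_mul _).restrict
    (ae_of_all _ fun x r (hr : δ < 1 - r ^ 2) =>
      (hasDerivAt_Hfun hσ x (by linarith)).mul_const (f x))
  refine (hderiv.const_mul 2).congr_deriv ?_
  have hfactor : (fun x => -(1 / (2 * π * √(1 - ρ ^ 2))) *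
      exp (-x ^ 2 / (2 * σ ^ 2 * (1 - ρ ^ 2))) * f x) =
      fun x => -(1 / (2 * π * √(1 - ρ ^ 2))) *
        (f x * exp (-x ^ 2 / (2 * σ ^ 2 * (1 - ρ ^ 2)))) := by
    ext x
    ring
  rw [hfactor, integral_const_mul]
  field_simp

theorem stmt_18_general (σ₁ : ℝ) (hσ₁ : 0 < σ₁) (f : ℝ → ℝ)
    (hfprob : ∫ x, f x = 1) :
    ∀ ρ ∈ Set.Ioo (-1 : ℝ) 1,
      HasDerivAt (Kfun σ₁ f)
        (-(1 / (Real.pi * Real.sqrt (1 - ρ ^ 2))) *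
          ∫ x in Set.Iic (0 : ℝ), f x * Real.exp (-x ^ 2 / (2 * σ₁ ^ 2 * (1 - ρ ^ 2)))) ρ := by
  -- the Bochner integral of a non-integrable function is `0`, not `1`
  have hf : Integrable f := by
    by_contra h
    rw [integral_undef h] at hfprob
    exact zero_ne_one hfprob
  intro ρ hρ
  exact hasDerivAt_Kfun hσ₁.ne' hf (by nlinarith [hρ.1, hρ.2])

theorem stmt_18 (σ₁ : ℝ) (hσ₁ : 0 < σ₁) (f : ℝ → ℝ)
    (hfmeas : Measurable f) (hfnonneg : ∀ x, 0 ≤ f x)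
    (hfprob : ∫ x, f x = 1) :
    ∀ ρ ∈ Set.Ioo (-1 : ℝ) 1,
      HasDerivAt (Kfun σ₁ f)
        (-(1 / (Real.pi * Real.sqrt (1 - ρ ^ 2))) *
          ∫ x in Set.Iic (0 : ℝ), f x * Real.exp (-x ^ 2 / (2 * σ₁ ^ 2 * (1 - ρ ^ 2)))) ρ :=
  stmt_18_general σ₁ hσ₁ f hfprob
end
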